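/- Let q ∈ ℝ with 0 ≤ q < 1, and let a, b : ℕ → ℂ satisfy Σ_n [n]_q! |a_n|² < ∞ and Σ_n [n]_q! |b_n|² < ∞. Then Σ_{n=0}^∞ [n]_q! · a_{n+1} · conj(b_n) = Σ_{n=1}^∞ [n]_q! · a_n · conj(b_{n−1}/[n]_q), both series converging absolutely; that is, the adjoint of the backward shift R_0 in H_{2,q} is the operator (I b)_n = b_{n−1}/[n]_q (for n ≥ 1, with (I b)_0 = 0), which is the q-Jackson integration operator sending z^ℓ to z^{ℓ+1}/[ℓ+1]_q. -/

import Mathlib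

/-! Since `[n+1]_q! · conj(b_n / [n+1]_q) = [n]_q! · conj(b_n)`, the `(n+1)`-st term of the
second series is the `n`-th term of the first, and its `0`-th term vanishes. Absolute convergence
of the first series follows from `2xy ≤ x² + y²` and `[n]_q! ≤ [n+1]_q!`. -/

open Finset

/-- q-bracket `[n]_q = 1 + q + ⋯ + q^(n-1)` (real version). -/
noncomputable def qBracket (q : ℝ) (n : ℕ) : ℝ := ∑ j ∈ Finset.range n, q ^ j

/-- q-factorial `[n]_q! = [1]_q [2]_q ⋯ [n]_q`, with `[0]_q! = 1`. -/
noncomputable def qFact (q : ℝ) (n : ℕ) : ℝ := ∏ i ∈ Finset.range n, qBracket q (i + 1)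

/-- The backward shift `(R_0 a)_n = a_(n+1)`. -/
def R0 (a : ℕ → ℂ) : ℕ → ℂ := fun n => a (n + 1)

/-- The q-Jackson integration operator on coefficient sequences:
`(I b)_n = b_(n-1)/[n]_q` for `n ≥ 1`, `(I b)_0 = 0`; it sends `z^ℓ` to `z^(ℓ+1)/[ℓ+1]_q`. -/
noncomputable def Iq (q : ℝ) (b : ℕ → ℂ) : ℕ → ℂ :=
  fun n => if n = 0 then 0 else b (n - 1) / (qBracket q n : ℂ)

lemma Summable.mul_norm_mul_norm {ι E F : Type*} [SeminormedAddCommGroup E]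
    [SeminormedAddCommGroup F] {w : ι → ℝ} {x : ι → E} {y : ι → F}
    (hw : ∀ i, 0 ≤ w i) (hx : Summable fun i => w i * ‖x i‖ ^ 2)
    (hy : Summable fun i => w i * ‖y i‖ ^ 2) :
    Summable fun i => w i * (‖x i‖ * ‖y i‖) := by
  refine Summable.of_nonneg_of_le (fun i => mul_nonneg (hw i) (by positivity)) (fun i => ?_)
    ((hx.add hy).div_const 2)
  have h := mul_le_mul_of_nonneg_left (two_mul_le_add_sq ‖x i‖ ‖y i‖) (hw i)
  linarith

section qCalculus

variable {q : ℝ}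

lemma one_le_qBracket_succ (hq : 0 ≤ q) (n : ℕ) : 1 ≤ qBracket q (n + 1) := by
  rw [qBracket, Finset.sum_range_succ', pow_zero, le_add_iff_nonneg_left]
  exact Finset.sum_nonneg fun j _ => pow_nonneg hq _

lemma qFact_succ (q : ℝ) (n : ℕ) : qFact q (n + 1) = qFact q n * qBracket q (n + 1) :=
  Finset.prod_range_succ _ n

lemma one_le_qFact (hq : 0 ≤ q) (n : ℕ) : 1 ≤ qFact q n := by
  induction n with
  | zero => simp [qFact]
  | succ k ih =>
    rw [qFact_succ]
    exact one_le_mul_of_one_le_of_one_le ih (one_le_qBracket_succ hq k)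

lemma qFact_nonneg (hq : 0 ≤ q) (n : ℕ) : 0 ≤ qFact q n :=
  zero_le_one.trans (one_le_qFact hq n)

lemma qFact_le_qFact_succ (hq : 0 ≤ q) (n : ℕ) : qFact q n ≤ qFact q (n + 1) := by
  rw [qFact_succ]
  exact le_mul_of_one_le_right (qFact_nonneg hq n) (one_le_qBracket_succ hq n)

lemma qFact_succ_mul_conj_Iq_succ (hq : 0 ≤ q) (b : ℕ → ℂ) (n : ℕ) :
    (qFact q (n + 1) : ℂ) * starRingEnd ℂ (Iq q b (n + 1)) =
      qFact q n * starRingEnd ℂ (b n) := by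
  have hB : (qBracket q (n + 1) : ℂ) ≠ 0 :=
    Complex.ofReal_ne_zero.2 (one_pos.trans_le (one_le_qBracket_succ hq n)).ne'
  simp only [Iq, Nat.succ_ne_zero, if_false, Nat.add_sub_cancel, map_div₀, Complex.conj_ofReal,
    qFact_succ, Complex.ofReal_mul]
  field_simp

end qCalculus

theorem R0_adjoint_eq_qJackson_general (q : ℝ) (hq0 : 0 ≤ q) (a b : ℕ → ℂ)
    (ha : Summable fun n : ℕ => qFact q n * ‖a n‖ ^ 2)
    (hb : Summable fun n : ℕ => qFact q n * ‖b n‖ ^ 2) :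
    Summable (fun n : ℕ => ‖(qFact q n : ℂ) * R0 a n * (starRingEnd ℂ) (b n)‖) ∧
    Summable (fun n : ℕ => ‖(qFact q n : ℂ) * a n * (starRingEnd ℂ) (Iq q b n)‖) ∧
    ∑' n : ℕ, (qFact q n : ℂ) * R0 a n * (starRingEnd ℂ) (b n)
      = ∑' n : ℕ, (qFact q n : ℂ) * a n * (starRingEnd ℂ) (Iq q b n) := by
  set f := fun n : ℕ => (qFact q n : ℂ) * R0 a n * (starRingEnd ℂ) (b n)
  set g := fun n : ℕ => (qFact q n : ℂ) * a n * (starRingEnd ℂ) (Iq q b n)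
  have hg_succ : ∀ n, g (n + 1) = f n := fun n => by
    simp only [g, f, R0, mul_right_comm _ (a _), qFact_succ_mul_conj_Iq_succ hq0]
  have hRa : Summable fun n => qFact q n * ‖R0 a n‖ ^ 2 :=
    ((summable_nat_add_iff 1).2 ha).of_nonneg_of_le
      (fun n => mul_nonneg (qFact_nonneg hq0 n) (sq_nonneg _))
      (fun n => mul_le_mul_of_nonneg_right (qFact_le_qFact_succ hq0 n) (sq_nonneg _))
  have hf : Summable fun n => ‖f n‖ := by
    refine (hRa.mul_norm_mul_norm (qFact_nonneg hq0) hb).congr fun n => ?_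
    simp [f, Complex.norm_real, abs_of_nonneg (qFact_nonneg hq0 n), mul_assoc]
  have hg : Summable fun n => ‖g n‖ := by
    rw [← summable_nat_add_iff 1]
    simpa only [hg_succ] using hf
  have hg0 : g 0 = 0 := by simp [g, Iq]
  refine ⟨hf, hg, ?_⟩
  rw [hg.of_norm.tsum_eq_zero_add, hg0, zero_add]
  exact (tsum_congr hg_succ).symm

/-- In the q-Fock space `H_{2,q}` (inner product `⟨a,b⟩ = Σ_n [n]_q! a_n conj(b_n)`), for
`a, b` with `Σ [n]_q! |a_n|² < ∞`, `Σ [n]_q! |b_n|² < ∞`, the series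
`Σ_{n=0}^∞ [n]_q! a_(n+1) conj(b_n)` and `Σ_{n=1}^∞ [n]_q! a_n conj(b_(n-1)/[n]_q)` converge
absolutely and coincide: the adjoint of `R_0` in `H_{2,q}` is q-Jackson integration. -/
theorem R0_adjoint_eq_qJackson (q : ℝ) (hq0 : 0 ≤ q) (hq1 : q < 1) (a b : ℕ → ℂ)
    (ha : Summable fun n : ℕ => qFact q n * ‖a n‖ ^ 2)
    (hb : Summable fun n : ℕ => qFact q n * ‖b n‖ ^ 2) :
    Summable (fun n : ℕ => ‖(qFact q n : ℂ) * R0 a n * (starRingEnd ℂ) (b n)‖) ∧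
    Summable (fun n : ℕ => ‖(qFact q n : ℂ) * a n * (starRingEnd ℂ) (Iq q b n)‖) ∧
    ∑' n : ℕ, (qFact q n : ℂ) * R0 a n * (starRingEnd ℂ) (b n)
      = ∑' n : ℕ, (qFact q n : ℂ) * a n * (starRingEnd ℂ) (Iq q b n) :=
  R0_adjoint_eq_qJackson_general q hq0 a b ha hb
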